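/- arXiv:1108.2110 — 3 statements merged into one kernel-verified Lean document; each statement's English description precedes it below -/
import Mathlib

section
/- Let u₀, u₁ : ℝ × ℝ → ℝ be smooth functions of (y, t) satisfying the decoupled system u₀_t = (1/8)(2 u₀_{yyy} − (u₀_y)³) and u₁_t = (1/8)(2 u₁_{yyy} + 3 u₁_y u₁²). Define φ₀ = (1/2) u₁ and φ₁ = (1/4)(−2 u₀_{yy} + (u₀_y)² + u₁²). Then φ₀, φ₁ satisfy the coupled system φ₀_t = (1/4)(φ₀_{yyy} + 6 φ₀_y φ₀²) and φ₁_t = (1/4)(φ₁_{yyy} − 6 φ₁_y φ₁ + 6 φ₁_y φ₀² + 12 φ₁ φ₀_y φ₀ − 6 φ₀_{yy} φ₀_y). -/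
/-- Partial derivative in the first (spatial) variable. -/
noncomputable def pdy (f : ℝ → ℝ → ℝ) : ℝ → ℝ → ℝ := fun y t => deriv (fun z => f z t) y

/-- Partial derivative in the second (time) variable. -/
noncomputable def pdt (f : ℝ → ℝ → ℝ) : ℝ → ℝ → ℝ := fun y t => deriv (fun s => f y s) t

/-- Directional derivative of a function on the plane. -/
noncomputable def Dv (v : ℝ × ℝ) (F : ℝ × ℝ → ℝ) : ℝ × ℝ → ℝ := fun p => fderiv ℝ F p v

lemma Dv_smooth (v : ℝ × ℝ) {F : ℝ × ℝ → ℝ} (hF : ContDiff ℝ (⊤ : ℕ∞) F) :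
    ContDiff ℝ (⊤ : ℕ∞) (Dv v F) :=
  (hF.fderiv_right ((by simp))).clm_apply contDiff_const

lemma Dv_add {F G : ℝ × ℝ → ℝ} {v p : ℝ × ℝ} (hF : DifferentiableAt ℝ F p)
    (hG : DifferentiableAt ℝ G p) :
    Dv v (fun q => F q + G q) p = Dv v F p + Dv v G p := by
  simp [Dv, fderiv_fun_add hF hG]

lemma Dv_sub {F G : ℝ × ℝ → ℝ} {v p : ℝ × ℝ} (hF : DifferentiableAt ℝ F p)
    (hG : DifferentiableAt ℝ G p) :
    Dv v (fun q => F q - G q) p = Dv v F p - Dv v G p := by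
  simp [Dv, fderiv_fun_sub hF hG]

lemma Dv_const_mul {F : ℝ × ℝ → ℝ} {v p : ℝ × ℝ} (hF : DifferentiableAt ℝ F p) (c : ℝ) :
    Dv v (fun q => c * F q) p = c * Dv v F p := by
  simp [Dv, fderiv_const_mul hF c]

lemma Dv_mul {F G : ℝ × ℝ → ℝ} {v p : ℝ × ℝ} (hF : DifferentiableAt ℝ F p)
    (hG : DifferentiableAt ℝ G p) :
    Dv v (fun q => F q * G q) p = Dv v F p * G p + F p * Dv v G p := by
  simp [Dv, fderiv_fun_mul hF hG]
  ring

lemma Dv_sq {F : ℝ × ℝ → ℝ} {v p : ℝ × ℝ} (hF : DifferentiableAt ℝ F p) :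
    Dv v (fun q => F q ^ 2) p = 2 * F p * Dv v F p := by
  have h : (fun q => F q ^ 2) = fun q => F q * F q := by funext q; ring
  rw [h, Dv_mul hF hF]; ring

lemma Dv_cube {F : ℝ × ℝ → ℝ} {v p : ℝ × ℝ} (hF : DifferentiableAt ℝ F p) :
    Dv v (fun q => F q ^ 3) p = 3 * F p ^ 2 * Dv v F p := by
  have h : (fun q => F q ^ 3) = fun q => F q * F q ^ 2 := by funext q; ring
  rw [h, Dv_mul hF (hF.fun_pow 2), Dv_sq hF]; ring

/-- Clairaut's theorem for smooth functions on the plane. -/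
lemma Dv_comm {F : ℝ × ℝ → ℝ} (hF : ContDiff ℝ (⊤ : ℕ∞) F) (v w p : ℝ × ℝ) :
    Dv v (Dv w F) p = Dv w (Dv v F) p := by
  have hd : ∀ q, HasFDerivAt F (fderiv ℝ F q) q := fun q =>
    (hF.differentiable (by simp) q).hasFDerivAt
  have h1 : ContDiff ℝ (⊤ : ℕ∞) (fderiv ℝ F) := hF.fderiv_right ((by simp))
  have h2 : HasFDerivAt (fderiv ℝ F) (fderiv ℝ (fderiv ℝ F) p) p :=
    (h1.differentiable (by simp) p).hasFDerivAt
  have key : ∀ a b : ℝ × ℝ, Dv a (Dv b F) p = fderiv ℝ (fderiv ℝ F) p a b := by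
    intro a b
    have h3 : HasFDerivAt (fun q => (fderiv ℝ F q) b)
        ((ContinuousLinearMap.apply ℝ ℝ b).comp (fderiv ℝ (fderiv ℝ F) p)) p :=
      (ContinuousLinearMap.apply ℝ ℝ b).hasFDerivAt.comp p h2
    have e : fderiv ℝ (Dv b F) p
        = (ContinuousLinearMap.apply ℝ ℝ b).comp (fderiv ℝ (fderiv ℝ F) p) := h3.fderiv
    show fderiv ℝ (Dv b F) p a = _
    rw [e]
    rfl
  rw [key v w, key w v, second_derivative_symmetric hd h2 w v]

/-- Bridge: `pdy` is the directional derivative in direction `(1,0)`. -/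
lemma pdy_eq {f : ℝ → ℝ → ℝ} (hf : ContDiff ℝ (⊤ : ℕ∞) fun p : ℝ × ℝ => f p.1 p.2) (y t : ℝ) :
    pdy f y t = Dv (1, 0) (fun p : ℝ × ℝ => f p.1 p.2) (y, t) := by
  have h := (hf.differentiable (by simp) (y, t)).hasFDerivAt
  have hl : HasDerivAt (fun z : ℝ => ((z, t) : ℝ × ℝ)) ((1 : ℝ), (0 : ℝ)) y :=
    (hasDerivAt_id y).prodMk (hasDerivAt_const y t)
  have := h.comp_hasDerivAt y hl
  exact this.deriv

/-- Bridge: `pdt` is the directional derivative in direction `(0,1)`. -/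
lemma pdt_eq {f : ℝ → ℝ → ℝ} (hf : ContDiff ℝ (⊤ : ℕ∞) fun p : ℝ × ℝ => f p.1 p.2) (y t : ℝ) :
    pdt f y t = Dv (0, 1) (fun p : ℝ × ℝ => f p.1 p.2) (y, t) := by
  have h := (hf.differentiable (by simp) (y, t)).hasFDerivAt
  have hl : HasDerivAt (fun s : ℝ => ((y, s) : ℝ × ℝ)) ((0 : ℝ), (1 : ℝ)) t :=
    (hasDerivAt_const t y).prodMk (hasDerivAt_id t)
  have := h.comp_hasDerivAt t hl
  exact this.deriv

/-- the bosonic-limit Miura transformation between the modified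
equation (39) and the bosonic limit of SKdV₋₂. -/
theorem stmt_0 (u0 u1 : ℝ → ℝ → ℝ)
    (hu0 : ContDiff ℝ (⊤ : ℕ∞) fun p : ℝ × ℝ => u0 p.1 p.2)
    (hu1 : ContDiff ℝ (⊤ : ℕ∞) fun p : ℝ × ℝ => u1 p.1 p.2)
    (heq0 : ∀ y t, pdt u0 y t = (1/8) * (2 * pdy (pdy (pdy u0)) y t - (pdy u0 y t)^3))
    (heq1 : ∀ y t, pdt u1 y t = (1/8) * (2 * pdy (pdy (pdy u1)) y t + 3 * pdy u1 y t * (u1 y t)^2))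
    (φ0 φ1 : ℝ → ℝ → ℝ)
    (hφ0 : ∀ y t, φ0 y t = (1/2) * u1 y t)
    (hφ1 : ∀ y t, φ1 y t = (1/4) * (-2 * pdy (pdy u0) y t + (pdy u0 y t)^2 + (u1 y t)^2)) :
    (∀ y t, pdt φ0 y t = (1/4) * (pdy (pdy (pdy φ0)) y t + 6 * pdy φ0 y t * (φ0 y t)^2)) ∧
    (∀ y t, pdt φ1 y t = (1/4) * (pdy (pdy (pdy φ1)) y t - 6 * pdy φ1 y t * φ1 y t
      + 6 * pdy φ1 y t * (φ0 y t)^2 + 12 * φ1 y t * pdy φ0 y t * φ0 y t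
      - 6 * pdy (pdy φ0) y t * pdy φ0 y t)) := by
  set e1 : ℝ × ℝ := (1, 0) with he1
  set e2 : ℝ × ℝ := (0, 1) with he2
  set U : ℝ × ℝ → ℝ := fun p => u0 p.1 p.2 with hU
  set B : ℝ × ℝ → ℝ := fun p => u1 p.1 p.2 with hB
  set A : ℝ × ℝ → ℝ := Dv e1 U with hA
  set A1 : ℝ × ℝ → ℝ := Dv e1 A with hA1
  set A2 : ℝ × ℝ → ℝ := Dv e1 A1 with hA2
  set B1 : ℝ × ℝ → ℝ := Dv e1 B with hB1
  set B2 : ℝ × ℝ → ℝ := Dv e1 B1 with hB2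
  set B3 : ℝ × ℝ → ℝ := Dv e1 B2 with hB3
  -- smoothness
  have sU : ContDiff ℝ (⊤ : ℕ∞) U := hu0
  have sB : ContDiff ℝ (⊤ : ℕ∞) B := hu1
  have sA : ContDiff ℝ (⊤ : ℕ∞) A := Dv_smooth e1 sU
  have sA1 : ContDiff ℝ (⊤ : ℕ∞) A1 := Dv_smooth e1 sA
  have sA2 : ContDiff ℝ (⊤ : ℕ∞) A2 := Dv_smooth e1 sA1
  have sB1 : ContDiff ℝ (⊤ : ℕ∞) B1 := Dv_smooth e1 sB
  have sB2 : ContDiff ℝ (⊤ : ℕ∞) B2 := Dv_smooth e1 sB1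
  have sB3 : ContDiff ℝ (⊤ : ℕ∞) B3 := Dv_smooth e1 sB2
  have dA : ∀ p, DifferentiableAt ℝ A p := fun p => (sA.differentiable (by simp) p)
  have dA1 : ∀ p, DifferentiableAt ℝ A1 p := fun p => (sA1.differentiable (by simp) p)
  have dA2 : ∀ p, DifferentiableAt ℝ A2 p := fun p => (sA2.differentiable (by simp) p)
  have dB : ∀ p, DifferentiableAt ℝ B p := fun p => (sB.differentiable (by simp) p)
  have dB1 : ∀ p, DifferentiableAt ℝ B1 p := fun p => (sB1.differentiable (by simp) p)
  have dB2 : ∀ p, DifferentiableAt ℝ B2 p := fun p => (sB2.differentiable (by simp) p)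
  -- translate pdy chains for u0
  have huy : (fun p : ℝ × ℝ => pdy u0 p.1 p.2) = A := by
    funext p; exact pdy_eq hu0 p.1 p.2
  have huyy : (fun p : ℝ × ℝ => pdy (pdy u0) p.1 p.2) = A1 := by
    funext p
    have h := pdy_eq (f := pdy u0) (by rw [huy]; exact sA) p.1 p.2
    rw [h, huy]
  have huyyy : (fun p : ℝ × ℝ => pdy (pdy (pdy u0)) p.1 p.2) = A2 := by
    funext p
    have h := pdy_eq (f := pdy (pdy u0)) (by rw [huyy]; exact sA1) p.1 p.2
    rw [h, huyy]
  -- translate pdy chains for u1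
  have hvy : (fun p : ℝ × ℝ => pdy u1 p.1 p.2) = B1 := by
    funext p; exact pdy_eq hu1 p.1 p.2
  have hvyy : (fun p : ℝ × ℝ => pdy (pdy u1) p.1 p.2) = B2 := by
    funext p
    have h := pdy_eq (f := pdy u1) (by rw [hvy]; exact sB1) p.1 p.2
    rw [h, hvy]
  have hvyyy : (fun p : ℝ × ℝ => pdy (pdy (pdy u1)) p.1 p.2) = B3 := by
    funext p
    have h := pdy_eq (f := pdy (pdy u1)) (by rw [hvyy]; exact sB2) p.1 p.2
    rw [h, hvyy]
  -- translate the evolution equations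
  have hUt : Dv e2 U = fun p => (1/8) * (2 * A2 p - (A p)^3) := by
    funext p
    have h := pdt_eq hu0 p.1 p.2
    have h2 := heq0 p.1 p.2
    rw [h2] at h
    have e3 := congrFun huyyy p
    have e4 := congrFun huy p
    rw [e3, e4] at h
    rw [← h]
  have hBt : Dv e2 B = fun p => (1/8) * (2 * B3 p + 3 * B1 p * (B p)^2) := by
    funext p
    have h := pdt_eq hu1 p.1 p.2
    have h2 := heq1 p.1 p.2
    rw [h2] at h
    have e3 := congrFun hvyyy p
    have e4 := congrFun hvy p
    rw [e3, e4] at h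
    rw [← h]
  have hAt : ∀ p, Dv e2 A p = (1/8) * (2 * Dv e1 A2 p - 3 * (A p)^2 * A1 p) := by
    intro p
    have hcomm := Dv_comm sU e2 e1 p
    have : Dv e2 A p = Dv e1 (Dv e2 U) p := by rw [hA]; exact hcomm
    rw [this, hUt]
    rw [Dv_const_mul (by
      exact ((dA2 p).const_mul 2).fun_sub ((dA p).fun_pow 3)) (1/8 : ℝ)]
    rw [Dv_sub ((dA2 p).const_mul 2) ((dA p).fun_pow 3)]
    rw [Dv_const_mul (dA2 p) (2 : ℝ), Dv_cube (dA p)]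
    try ring
  have hAtfun : Dv e2 A = fun p => (1/8) * (2 * Dv e1 A2 p - 3 * (A p)^2 * A1 p) :=
    funext hAt
  have sA3 : ContDiff ℝ (⊤ : ℕ∞) (Dv e1 A2) := Dv_smooth e1 sA2
  have dA3 : ∀ p, DifferentiableAt ℝ (Dv e1 A2) p := fun p => sA3.differentiable (by simp) p
  have hA1t : ∀ p, Dv e2 A1 p = (1/8) * (2 * Dv e1 (Dv e1 A2) p
      - 3 * (2 * A p * A1 p) * A1 p - 3 * (A p)^2 * A2 p) := by
    intro p
    have hcomm := Dv_comm sA e2 e1 p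
    have : Dv e2 A1 p = Dv e1 (Dv e2 A) p := by rw [hA1]; exact hcomm
    rw [this, hAtfun]
    rw [Dv_const_mul (by
      exact ((dA3 p).const_mul 2).fun_sub ((((dA p).fun_pow 2).const_mul 3).fun_mul (dA1 p))) (1/8 : ℝ)]
    rw [Dv_sub ((dA3 p).const_mul 2) ((((dA p).fun_pow 2).const_mul 3).fun_mul (dA1 p))]
    rw [Dv_const_mul (dA3 p) (2 : ℝ)]
    rw [Dv_mul (((dA p).fun_pow 2).const_mul 3) (dA1 p)]
    rw [Dv_const_mul ((dA p).fun_pow 2) (3 : ℝ), Dv_sq (dA p)]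
    try ring
  -- φ0 as a plane function
  have hP0 : (fun p : ℝ × ℝ => φ0 p.1 p.2) = fun p => (1/2) * B p := by
    funext p; exact hφ0 p.1 p.2
  have sP0 : ContDiff ℝ (⊤ : ℕ∞) fun p : ℝ × ℝ => φ0 p.1 p.2 := by
    rw [hP0]; exact contDiff_const.mul sB
  have hP0y : (fun p : ℝ × ℝ => pdy φ0 p.1 p.2) = fun p => (1/2) * B1 p := by
    funext p
    rw [pdy_eq sP0 p.1 p.2, hP0, Dv_const_mul (dB _) (1/2 : ℝ)]
  have sP0y : ContDiff ℝ (⊤ : ℕ∞) fun p : ℝ × ℝ => pdy φ0 p.1 p.2 := by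
    rw [hP0y]; exact contDiff_const.mul sB1
  have hP0yy : (fun p : ℝ × ℝ => pdy (pdy φ0) p.1 p.2) = fun p => (1/2) * B2 p := by
    funext p
    rw [pdy_eq sP0y p.1 p.2, hP0y, Dv_const_mul (dB1 _) (1/2 : ℝ)]
  have sP0yy : ContDiff ℝ (⊤ : ℕ∞) fun p : ℝ × ℝ => pdy (pdy φ0) p.1 p.2 := by
    rw [hP0yy]; exact contDiff_const.mul sB2
  have hP0yyy : (fun p : ℝ × ℝ => pdy (pdy (pdy φ0)) p.1 p.2) = fun p => (1/2) * B3 p := by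
    funext p
    rw [pdy_eq sP0yy p.1 p.2, hP0yy, Dv_const_mul (dB2 _) (1/2 : ℝ)]
  have hP0t : ∀ p : ℝ × ℝ, pdt φ0 p.1 p.2 = (1/2) * Dv e2 B p := by
    intro p
    rw [pdt_eq sP0 p.1 p.2, hP0, Dv_const_mul (dB _) (1/2 : ℝ)]
  -- φ1 as a plane function
  have hP1 : (fun p : ℝ × ℝ => φ1 p.1 p.2)
      = fun p => (1/4) * (-2 * A1 p + (A p)^2 + (B p)^2) := by
    funext p
    have h := hφ1 p.1 p.2
    have e3 := congrFun huyy p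
    have e4 := congrFun huy p
    rw [h, e3, e4]
  have sP1body : ContDiff ℝ (⊤ : ℕ∞) fun p : ℝ × ℝ => (1/4) * (-2 * A1 p + (A p)^2 + (B p)^2) := by
    apply contDiff_const.mul
    exact ((contDiff_const.mul sA1).add (sA.pow 2)).add (sB.pow 2)
  have sP1 : ContDiff ℝ (⊤ : ℕ∞) fun p : ℝ × ℝ => φ1 p.1 p.2 := by rw [hP1]; exact sP1body
  have dbody1 : ∀ p, DifferentiableAt ℝ
      (fun q : ℝ × ℝ => -2 * A1 q + (A q)^2 + (B q)^2) p := fun p =>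
    (((dA1 p).const_mul (-2)).add ((dA p).pow 2)).add ((dB p).pow 2)
  have hP1y : (fun p : ℝ × ℝ => pdy φ1 p.1 p.2)
      = fun p => (1/4) * (-2 * A2 p + 2 * A p * A1 p + 2 * B p * B1 p) := by
    funext p
    rw [pdy_eq sP1 p.1 p.2, hP1]
    rw [Dv_const_mul (dbody1 p) (1/4 : ℝ)]
    rw [Dv_add (((dA1 p).const_mul (-2)).fun_add ((dA p).fun_pow 2)) ((dB p).fun_pow 2)]
    rw [Dv_add ((dA1 p).const_mul (-2)) ((dA p).fun_pow 2)]
    rw [Dv_const_mul (dA1 p) (-2 : ℝ), Dv_sq (dA p), Dv_sq (dB p)]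
    try ring
  have sP1y : ContDiff ℝ (⊤ : ℕ∞) fun p : ℝ × ℝ => pdy φ1 p.1 p.2 := by
    rw [hP1y]
    apply contDiff_const.mul
    exact ((contDiff_const.mul sA2).add ((contDiff_const.mul sA).mul sA1)).add
      ((contDiff_const.mul sB).mul sB1)
  have dbody2 : ∀ p, DifferentiableAt ℝ
      (fun q : ℝ × ℝ => -2 * A2 q + 2 * A q * A1 q + 2 * B q * B1 q) p := fun p =>
    (((dA2 p).const_mul (-2)).add (((dA p).const_mul 2).mul (dA1 p))).add
      (((dB p).const_mul 2).mul (dB1 p))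
  have hP1yy : (fun p : ℝ × ℝ => pdy (pdy φ1) p.1 p.2)
      = fun p => (1/4) * (-2 * Dv e1 A2 p + 2 * (A1 p * A1 p + A p * A2 p)
        + 2 * (B1 p * B1 p + B p * B2 p)) := by
    funext p
    rw [pdy_eq sP1y p.1 p.2, hP1y]
    rw [Dv_const_mul (dbody2 p) (1/4 : ℝ)]
    rw [Dv_add (((dA2 p).const_mul (-2)).fun_add (((dA p).const_mul 2).fun_mul (dA1 p)))
      (((dB p).const_mul 2).fun_mul (dB1 p))]
    rw [Dv_add ((dA2 p).const_mul (-2)) (((dA p).const_mul 2).fun_mul (dA1 p))]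
    rw [Dv_const_mul (dA2 p) (-2 : ℝ)]
    rw [Dv_mul ((dA p).const_mul 2) (dA1 p), Dv_const_mul (dA p) (2 : ℝ)]
    rw [Dv_mul ((dB p).const_mul 2) (dB1 p), Dv_const_mul (dB p) (2 : ℝ)]
    try ring
  have sP1yy : ContDiff ℝ (⊤ : ℕ∞) fun p : ℝ × ℝ => pdy (pdy φ1) p.1 p.2 := by
    rw [hP1yy]
    apply contDiff_const.mul
    exact ((contDiff_const.mul sA3).add
        (contDiff_const.mul ((sA1.mul sA1).add (sA.mul sA2)))).add
      (contDiff_const.mul ((sB1.mul sB1).add (sB.mul sB2)))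
  have dbody3 : ∀ p, DifferentiableAt ℝ
      (fun q : ℝ × ℝ => -2 * Dv e1 A2 q + 2 * (A1 q * A1 q + A q * A2 q)
        + 2 * (B1 q * B1 q + B q * B2 q)) p := fun p =>
    (((dA3 p).const_mul (-2)).add
        ((((dA1 p).mul (dA1 p)).add ((dA p).mul (dA2 p))).const_mul 2)).add
      ((((dB1 p).mul (dB1 p)).add ((dB p).mul (dB2 p))).const_mul 2)
  have hP1yyy : (fun p : ℝ × ℝ => pdy (pdy (pdy φ1)) p.1 p.2)
      = fun p => (1/4) * (-2 * Dv e1 (Dv e1 A2) p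
        + 2 * ((A2 p * A1 p + A1 p * A2 p) + (A1 p * A2 p + A p * Dv e1 A2 p))
        + 2 * ((B2 p * B1 p + B1 p * B2 p) + (B1 p * B2 p + B p * B3 p))) := by
    funext p
    rw [pdy_eq sP1yy p.1 p.2, hP1yy]
    rw [Dv_const_mul (dbody3 p) (1/4 : ℝ)]
    rw [Dv_add (((dA3 p).const_mul (-2)).fun_add
        ((((dA1 p).fun_mul (dA1 p)).fun_add ((dA p).fun_mul (dA2 p))).const_mul 2))
      ((((dB1 p).fun_mul (dB1 p)).fun_add ((dB p).fun_mul (dB2 p))).const_mul 2)]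
    rw [Dv_add ((dA3 p).const_mul (-2))
      ((((dA1 p).fun_mul (dA1 p)).fun_add ((dA p).fun_mul (dA2 p))).const_mul 2)]
    rw [Dv_const_mul (dA3 p) (-2 : ℝ)]
    rw [Dv_const_mul (((dA1 p).fun_mul (dA1 p)).fun_add ((dA p).fun_mul (dA2 p))) (2 : ℝ)]
    rw [Dv_add ((dA1 p).fun_mul (dA1 p)) ((dA p).fun_mul (dA2 p))]
    rw [Dv_mul (dA1 p) (dA1 p), Dv_mul (dA p) (dA2 p)]
    rw [Dv_const_mul (((dB1 p).fun_mul (dB1 p)).fun_add ((dB p).fun_mul (dB2 p))) (2 : ℝ)]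
    rw [Dv_add ((dB1 p).fun_mul (dB1 p)) ((dB p).fun_mul (dB2 p))]
    rw [Dv_mul (dB1 p) (dB1 p), Dv_mul (dB p) (dB2 p)]
    try ring
  have hP1t : ∀ p : ℝ × ℝ, pdt φ1 p.1 p.2
      = (1/4) * (-2 * Dv e2 A1 p + 2 * A p * Dv e2 A p + 2 * B p * Dv e2 B p) := by
    intro p
    rw [pdt_eq sP1 p.1 p.2, hP1]
    rw [Dv_const_mul (dbody1 p) (1/4 : ℝ)]
    rw [Dv_add (((dA1 p).const_mul (-2)).fun_add ((dA p).fun_pow 2)) ((dB p).fun_pow 2)]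
    rw [Dv_add ((dA1 p).const_mul (-2)) ((dA p).fun_pow 2)]
    rw [Dv_const_mul (dA1 p) (-2 : ℝ), Dv_sq (dA p), Dv_sq (dB p)]
    try ring
  constructor
  · intro y t
    have p : ℝ × ℝ := (y, t)
    have h1 := hP0t (y, t)
    have h2 := congrFun hP0yyy (y, t)
    have h3 := congrFun hP0y (y, t)
    have h4 := congrFun hP0 (y, t)
    have h5 := congrFun hBt (y, t)
    simp only at h1 h2 h3 h4 h5
    rw [h1, h2, h3, h4, h5]
    try ring
  · intro y t
    have h1 := hP1t (y, t)
    have h2 := congrFun hP1yyy (y, t)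
    have h3 := congrFun hP1y (y, t)
    have h4 := congrFun hP1 (y, t)
    have h5 := congrFun hP0 (y, t)
    have h6 := congrFun hP0y (y, t)
    have h7 := congrFun hP0yy (y, t)
    have h8 := hA1t (y, t)
    have h9 := hAt (y, t)
    have h10 := congrFun hBt (y, t)
    simp only at h1 h2 h3 h4 h5 h6 h7 h8 h9 h10
    rw [h1, h2, h3, h4, h5, h6, h7, h8, h9, h10]
    try ring
end

section
/- Let A be a supercommutative ℝ-superalgebra with odd derivations D₁, D₂ satisfying D₁² = D₂² = ∂ and D₁D₂ = −D₂D₁. Let a := D₁θ₁ and b := D₂θ₁ be even elements with K := a² + b² invertible, and define odd operators 𝒟₁ := K⁻¹(a D₁ + b D₂) and 𝒟₂ := K⁻¹(−b D₁ + a D₂), where K⁻¹ acts by left multiplication. Let L = log K be an even element with DᵢL = K⁻¹ DᵢK for i = 1, 2, and assume that Dᵢa and Dᵢb satisfy the superconformal constraints making 𝒟₁² = 𝒟₂² = (the induced ∂ₓ). Then, as operators on A, 𝒟₁𝒟₂ = K⁻¹[D₁D₂ + (1/2)(D₂L)D₁ − (1/2)(D₁L)D₂]. -/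
/-- A supercommutative superalgebra over `R`, presented through its even and odd
parts: even elements are central, odd elements anticommute with each other, and
the grading is multiplicative. -/
structure SuperAlg (R A : Type) [CommRing R] [Ring A] [Algebra R A] where
  even : Submodule R A
  odd : Submodule R A
  one_even : (1 : A) ∈ even
  even_comm : ∀ a ∈ even, ∀ b : A, a * b = b * a
  odd_anticomm : ∀ a ∈ odd, ∀ b ∈ odd, a * b = -(b * a)
  even_mul_even : ∀ a ∈ even, ∀ b ∈ even, a * b ∈ even
  even_mul_odd : ∀ a ∈ even, ∀ b ∈ odd, a * b ∈ odd
  odd_mul_even : ∀ a ∈ odd, ∀ b ∈ even, a * b ∈ odd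
  odd_mul_odd : ∀ a ∈ odd, ∀ b ∈ odd, a * b ∈ even

/-- An odd derivation of a supercommutative superalgebra: it is `R`-linear,
swaps parities, and satisfies the graded Leibniz rule
D(ab) = (Da)b + (−1)^{|a|} a(Db) for homogeneous a. -/
structure OddDer (R A : Type) [CommRing R] [Ring A] [Algebra R A]
    (S : SuperAlg R A) where
  D : A →ₗ[R] A
  even_to_odd : ∀ a ∈ S.even, D a ∈ S.odd
  odd_to_even : ∀ a ∈ S.odd, D a ∈ S.even
  leibniz_even : ∀ a ∈ S.even, ∀ b : A, D (a * b) = D a * b + a * D b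
  leibniz_odd : ∀ a ∈ S.odd, ∀ b : A, D (a * b) = D a * b - a * D b

/-- formula (16) of the paper — the transformed operator 𝒟₁𝒟₂
under an N=2 superconformal transformation equals
K⁻¹[D₁D₂ + (1/2)(D₂ log K)D₁ − (1/2)(D₁ log K)D₂],
with K = (D₁θ₁)² + (D₂θ₁)² and L = log K characterized by K·DᵢL = DᵢK. -/
theorem stmt_7 {A : Type} [Ring A] [Algebra ℝ A] (S : SuperAlg ℝ A)
    (D1 D2 : OddDer ℝ A S)
    (hsq : ∀ c : A, D1.D (D1.D c) = D2.D (D2.D c))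
    (hanti : ∀ c : A, D1.D (D2.D c) = -(D2.D (D1.D c)))
    (θ1 : A) (hθ1 : θ1 ∈ S.odd)
    (K Kinv : A) (hK : K = (D1.D θ1)^2 + (D2.D θ1)^2)
    (hKinv : K * Kinv = 1 ∧ Kinv * K = 1)
    -- L plays the role of log K : K · DᵢL = DᵢK
    (L : A) (hL : L ∈ S.even)
    (hL1 : K * D1.D L = D1.D K) (hL2 : K * D2.D L = D2.D K)
    -- the transformed super derivatives
    (DD1 DD2 : A → A)
    (hDD1 : ∀ c : A, DD1 c = Kinv * (D1.D θ1 * D1.D c + D2.D θ1 * D2.D c))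
    (hDD2 : ∀ c : A, DD2 c = Kinv * (-(D2.D θ1) * D1.D c + D1.D θ1 * D2.D c))
    -- superconformal constraints guaranteeing 𝒟₁² = 𝒟₂² ( = the induced ∂ₓ)
    (hsq' : ∀ c : A, DD1 (DD1 c) = DD2 (DD2 c)) :
    ∀ c : A, DD1 (DD2 c) =
      Kinv * (D1.D (D2.D c) + (1/2 : ℝ) • (D2.D L * D1.D c)
        - (1/2 : ℝ) • (D1.D L * D2.D c)) := by
  obtain ⟨hKi1, hKi2⟩ := hKinv
  set a : A := D1.D θ1 with ha_def
  set b : A := D2.D θ1 with hb_def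
  have ha : a ∈ S.even := D1.odd_to_even θ1 hθ1
  have hb : b ∈ S.even := D2.odd_to_even θ1 hθ1
  have hKe : K ∈ S.even := by
    rw [hK, pow_two, pow_two]
    exact Submodule.add_mem _ (S.even_mul_even a ha a ha) (S.even_mul_even b hb b hb)
  have ca : ∀ y : A, a * y = y * a := S.even_comm a ha
  have cb : ∀ y : A, b * y = y * b := S.even_comm b hb
  have cK : ∀ y : A, K * y = y * K := S.even_comm K hKe
  have maL : ∀ p q : A, p * (a * q) = a * (p * q) := fun p q => by
    rw [← mul_assoc, ← ca p, mul_assoc]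
  have mbL : ∀ p q : A, p * (b * q) = b * (p * q) := fun p q => by
    rw [← mul_assoc, ← cb p, mul_assoc]
  have mK : ∀ p q : A, K * (p * q) = p * (K * q) := fun p q => by
    rw [← mul_assoc, cK p, mul_assoc]
  have hkc : ∀ x : A, K * (Kinv * x) = x := fun x => by rw [← mul_assoc, hKi1, one_mul]
  have hck : ∀ x : A, Kinv * (K * x) = x := fun x => by rw [← mul_assoc, hKi2, one_mul]
  set s : A := D1.D a with hs_def
  set t : A := D2.D a with ht_def
  have hD2b : D2.D b = s := by rw [hs_def]; exact (hsq θ1).symm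
  have hD1b : D1.D b = -t := by rw [ht_def]; exact hanti θ1
  have msa : ∀ q : A, s * (a * q) = a * (s * q) := fun q => by
    rw [← mul_assoc, ← ca s, mul_assoc]
  have msb : ∀ q : A, s * (b * q) = b * (s * q) := fun q => by
    rw [← mul_assoc, ← cb s, mul_assoc]
  have mta : ∀ q : A, t * (a * q) = a * (t * q) := fun q => by
    rw [← mul_assoc, ← ca t, mul_assoc]
  have mtb : ∀ q : A, t * (b * q) = b * (t * q) := fun q => by
    rw [← mul_assoc, ← cb t, mul_assoc]
  have mba : ∀ q : A, b * (a * q) = a * (b * q) := fun q => by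
    rw [← mul_assoc, ← ca b, mul_assoc]
  have hDK1 : D1.D K = (2:ℝ) • (a*s - b*t) := by
    rw [hK, pow_two, pow_two, map_add, D1.leibniz_even a ha a, D1.leibniz_even b hb b,
      hD1b, ← hs_def, ← ca s, ← cb (-t)]
    simp only [mul_neg]
    module
  have hDK2 : D2.D K = (2:ℝ) • (a*t + b*s) := by
    rw [hK, pow_two, pow_two, map_add, D2.leibniz_even a ha a, D2.leibniz_even b hb b,
      hD2b, ← ht_def, ← ca t, ← cb s]
    module
  intro c
  set u : A := D1.D c with hu_def
  set v : A := D2.D c with hv_def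
  set w : A := D1.D u with hw_def
  set P : A := D1.D v with hP_def
  have hD2v : D2.D v = w := by rw [hw_def, hu_def, hv_def]; exact (hsq c).symm
  have hD2u : D2.D u = -P := by
    rw [hP_def, hu_def, hv_def, hanti c, neg_neg]
  -- X2val := -(b*u) + a*v
  have hX2 : K * DD2 c = -(b*u) + a*v := by
    rw [hDD2 c, hkc, neg_mul, ← hu_def, ← hv_def]
  have hD1X2 : D1.D (-(b*u) + a*v) = (t*u - b*w) + (s*v + a*P) := by
    rw [map_add, map_neg, D1.leibniz_even b hb u, D1.leibniz_even a ha v,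
      hD1b, ← hs_def, ← hw_def, ← hP_def, neg_mul]
    abel
  have hD2X2 : D2.D (-(b*u) + a*v) = (-(s*u) + b*P) + (t*v + a*w) := by
    rw [map_add, map_neg, D2.leibniz_even b hb u, D2.leibniz_even a ha v,
      hD2b, ← ht_def, hD2u, hD2v, mul_neg]
    abel
  -- Leibniz consequences for K * Di (DD2 c)
  have e1 : D1.D (-(b*u) + a*v) = D1.D K * DD2 c + K * D1.D (DD2 c) := by
    rw [← hX2]; exact D1.leibniz_even K hKe (DD2 c)
  have e2 : D2.D (-(b*u) + a*v) = D2.D K * DD2 c + K * D2.D (DD2 c) := by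
    rw [← hX2]; exact D2.leibniz_even K hKe (DD2 c)
  have hKd1 : K * D1.D (DD2 c) = ((t*u - b*w) + (s*v + a*P)) - D1.D K * DD2 c := by
    rw [← hD1X2, e1]; abel
  have hKd2 : K * D2.D (DD2 c) = ((-(s*u) + b*P) + (t*v + a*w)) - D2.D K * DD2 c := by
    rw [← hD2X2, e2]; abel
  have hKKd1 : K * (K * D1.D (DD2 c)) =
      K * ((t*u - b*w) + (s*v + a*P)) - ((2:ℝ) • (a*s - b*t)) * (-(b*u) + a*v) := by
    rw [hKd1, mul_sub, mK (D1.D K) (DD2 c), hX2, hDK1]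
  have hKKd2 : K * (K * D2.D (DD2 c)) =
      K * ((-(s*u) + b*P) + (t*v + a*w)) - ((2:ℝ) • (a*t + b*s)) * (-(b*u) + a*v) := by
    rw [hKd2, mul_sub, mK (D2.D K) (DD2 c), hX2, hDK2]
  have hLHS : K * (K * (a * D1.D (DD2 c) + b * D2.D (DD2 c))) =
      a * (K * ((t*u - b*w) + (s*v + a*P)) - ((2:ℝ) • (a*s - b*t)) * (-(b*u) + a*v))
      + b * (K * ((-(s*u) + b*P) + (t*v + a*w)) - ((2:ℝ) • (a*t + b*s)) * (-(b*u) + a*v)) := by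
    rw [mul_add, mK a, mK b, mul_add, mK a, mK b, hKKd1, hKKd2]
  have hKL1 : K * D1.D L = (2:ℝ) • (a*s - b*t) := hL1.trans hDK1
  have hKL2 : K * D2.D L = (2:ℝ) • (a*t + b*s) := hL2.trans hDK2
  have r2' : K * ((1/2:ℝ) • (D2.D L * u)) = (a*t + b*s) * u := by
    rw [mul_smul_comm, ← mul_assoc, hKL2, smul_mul_assoc, smul_smul]
    norm_num
  have r1' : K * ((1/2:ℝ) • (D1.D L * v)) = (a*s - b*t) * v := by
    rw [mul_smul_comm, ← mul_assoc, hKL1, smul_mul_assoc, smul_smul]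
    norm_num
  have hRHS : K * (K * (P + (1/2:ℝ) • (D2.D L * u) - (1/2:ℝ) • (D1.D L * v))) =
      K * (K * P) + K * ((a*t + b*s) * u) - K * ((a*s - b*t) * v) := by
    rw [mul_sub, mul_add, r2', r1', mul_sub, mul_add]
  rw [hDD1 (DD2 c)]
  suffices hmain : a * D1.D (DD2 c) + b * D2.D (DD2 c)
      = P + (1/2:ℝ) • (D2.D L * u) - (1/2:ℝ) • (D1.D L * v) by rw [hmain]
  have hdouble : K * (K * (a * D1.D (DD2 c) + b * D2.D (DD2 c))) =
      K * (K * (P + (1/2:ℝ) • (D2.D L * u) - (1/2:ℝ) • (D1.D L * v))) := by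
    rw [hLHS, hRHS, hK, pow_two, pow_two]
    simp only [mul_add, add_mul, mul_sub, sub_mul, neg_mul, mul_neg, neg_add, neg_neg,
      smul_mul_assoc, mul_smul_comm, smul_add, smul_sub, smul_neg, mul_assoc, msa, msb, mta, mtb, mba]
    module
  have h3 := congrArg (fun z => Kinv * (Kinv * z)) hdouble
  simpa only [hck] using h3
end

section
/- Let A be a supercommutative ℝ-superalgebra with odd derivations D₁, D₂ satisfying D₁² = D₂² = ∂ᵧ and D₁D₂ = −D₂D₁, and let U ∈ A be even with K := e^{2U}, meaning K is even and invertible and satisfies DᵢK = 2(DᵢU)K for i = 1,2, and write U_y := ∂ᵧU. Then the following operator identity holds on A: [K∂ᵧ + (1/2)(D₂K)D₂ + (1/2)(D₁K)D₁] ∘ K⁻¹ ∘ [∂ᵧ − (D₂U)D₂ − (D₁U)D₁] = ∂ᵧ² − 2U_y∂ᵧ − 2(D₂U)(D₁U)D₁D₂ + (1/2)(−2(D₂U_y) + 2(D₂U)U_y − 2(D₁U)(D₁D₂U))D₂ + (1/2)(−2(D₁U_y) + 2(D₁U)U_y + 2(D₂U)(D₁D₂U))D₁. -/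
/-- the second-order operator identity (37) of the paper (with the
paper's U replaced by 2U, i.e. K = e^{2U}, DᵢK = 2(DᵢU)K):
[K∂ᵧ + (1/2)(D₂K)D₂ + (1/2)(D₁K)D₁] K⁻¹ [∂ᵧ − (D₂U)D₂ − (D₁U)D₁]
  = ∂ᵧ² − 2U_y∂ᵧ − 2(D₂U)(D₁U)D₁D₂
    + (1/2)(−2(D₂U_y) + 2(D₂U)U_y − 2(D₁U)(D₁D₂U))D₂
    + (1/2)(−2(D₁U_y) + 2(D₁U)U_y + 2(D₂U)(D₁D₂U))D₁,
where ∂ᵧ = D₁² = D₂² and U_y = ∂ᵧU. -/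
theorem stmt_12 {A : Type} [Ring A] [Algebra ℝ A] (S : SuperAlg ℝ A)
    (D1 D2 : OddDer ℝ A S)
    (hsq : ∀ a : A, D1.D (D1.D a) = D2.D (D2.D a))
    (hanti : ∀ a : A, D1.D (D2.D a) = -(D2.D (D1.D a)))
    (U : A) (hU : U ∈ S.even)
    (K Kinv : A) (hK : K ∈ S.even)
    (hKinv : K * Kinv = 1 ∧ Kinv * K = 1)
    (hK1 : D1.D K = (2 : ℝ) • (D1.D U * K)) (hK2 : D2.D K = (2 : ℝ) • (D2.D U * K))
    -- Q is the inner operator K⁻¹[∂ᵧ − (D₂U)D₂ − (D₁U)D₁]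
    (Q : A → A)
    (hQ : ∀ a : A, Q a = Kinv * (D1.D (D1.D a) - D2.D U * D2.D a - D1.D U * D1.D a)) :
    ∀ a : A,
      K * D1.D (D1.D (Q a)) + (1/2 : ℝ) • (D2.D K * D2.D (Q a))
        + (1/2 : ℝ) • (D1.D K * D1.D (Q a))
      = D1.D (D1.D (D1.D (D1.D a)))
        - (2 : ℝ) • (D1.D (D1.D U) * D1.D (D1.D a))
        - (2 : ℝ) • (D2.D U * D1.D U * D1.D (D2.D a))
        + (1/2 : ℝ) • (((-2 : ℝ) • D2.D (D1.D (D1.D U))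
            + (2 : ℝ) • (D2.D U * D1.D (D1.D U))
            - (2 : ℝ) • (D1.D U * D1.D (D2.D U))) * D2.D a)
        + (1/2 : ℝ) • (((-2 : ℝ) • D1.D (D1.D (D1.D U))
            + (2 : ℝ) • (D1.D U * D1.D (D1.D U))
            + (2 : ℝ) • (D2.D U * D1.D (D2.D U))) * D1.D a) := by

  obtain ⟨hKK, hKK'⟩ := hKinv
  have hu1 : D1.D U ∈ S.odd := D1.even_to_odd U hU
  have hu2 : D2.D U ∈ S.odd := D2.even_to_odd U hU
  have hw1 : D1.D (D2.D U) ∈ S.even := D1.odd_to_even _ hu2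
  have hw2 : D2.D (D1.D U) ∈ S.even := D2.odd_to_even _ hu1
  have hy1 : D1.D (D1.D U) ∈ S.even := D1.odd_to_even _ hu1
  have hy2 : D2.D (D2.D U) ∈ S.even := D2.odd_to_even _ hu2
  have hsq0 : ∀ x ∈ S.odd, x * x = (0 : A) := by
    intro x hx
    have h := S.odd_anticomm x hx x hx
    have h2 : x * x + x * x = 0 := by nth_rewrite 1 [h]; exact neg_add_cancel _
    have h3 : (2 : ℝ) • (x * x) = 0 := by rw [two_smul]; exact h2
    calc x * x = ((1/2 : ℝ) * 2) • (x * x) := by norm_num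
      _ = (1/2 : ℝ) • ((2 : ℝ) • (x * x)) := by rw [smul_smul]
      _ = 0 := by rw [h3, smul_zero]
  have k1 : ∀ z : A, K * (Kinv * z) = z := by
    intro z; rw [← mul_assoc, hKK, one_mul]
  have k1' : ∀ z : A, Kinv * (K * z) = z := by
    intro z; rw [← mul_assoc, hKK', one_mul]
  have ce : ∀ e ∈ S.even, ∀ y z : A, e * (y * z) = y * (e * z) := by
    intro e he y z; rw [← mul_assoc, S.even_comm e he y, mul_assoc]
  have kc : ∀ y z : A, Kinv * (y * z) = y * (Kinv * z) := by
    intro y z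
    calc Kinv * (y * z) = Kinv * (y * (K * (Kinv * z))) := by rw [k1]
      _ = Kinv * (K * (y * (Kinv * z))) := by
          rw [← mul_assoc y, ← S.even_comm K hK y, mul_assoc]
      _ = y * (Kinv * z) := k1' _
  have k2 : ∀ y z : A, K * (y * (Kinv * z)) = y * z := by
    intro y z
    rw [← mul_assoc, S.even_comm K hK y, mul_assoc, k1]
  have h1 : ∀ x : A, D1.D (Kinv * x) = Kinv * D1.D x - (2 : ℝ) • (D1.D U * (Kinv * x)) := by
    intro x
    have base := D1.leibniz_even K hK (Kinv * x)
    rw [k1] at base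
    have e1 : D1.D (Kinv * x) = Kinv * D1.D x - Kinv * (D1.D K * (Kinv * x)) := by
      rw [base, mul_add, k1']; abel
    rw [e1, hK1, smul_mul_assoc, mul_assoc, k1, mul_smul_comm, kc]
  have h2 : ∀ x : A, D2.D (Kinv * x) = Kinv * D2.D x - (2 : ℝ) • (D2.D U * (Kinv * x)) := by
    intro x
    have base := D2.leibniz_even K hK (Kinv * x)
    rw [k1] at base
    have e1 : D2.D (Kinv * x) = Kinv * D2.D x - Kinv * (D2.D K * (Kinv * x)) := by
      rw [base, mul_add, k1']; abel
    rw [e1, hK2, smul_mul_assoc, mul_assoc, k1, mul_smul_comm, kc]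
  have hLo1 : ∀ b : A, D1.D (D1.D U * b) = D1.D (D1.D U) * b - D1.D U * D1.D b :=
    fun b => D1.leibniz_odd _ hu1 b
  have hLo2 : ∀ b : A, D1.D (D2.D U * b) = D1.D (D2.D U) * b - D2.D U * D1.D b :=
    fun b => D1.leibniz_odd _ hu2 b
  have hLo3 : ∀ b : A, D2.D (D1.D U * b) = D2.D (D1.D U) * b - D1.D U * D2.D b :=
    fun b => D2.leibniz_odd _ hu1 b
  have hLo4 : ∀ b : A, D2.D (D2.D U * b) = D2.D (D2.D U) * b - D2.D U * D2.D b :=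
    fun b => D2.leibniz_odd _ hu2 b
  have hLe1 : ∀ b : A, D1.D (D1.D (D2.D U) * b)
      = D1.D (D1.D (D2.D U)) * b + D1.D (D2.D U) * D1.D b :=
    fun b => D1.leibniz_even _ hw1 b
  have hLe2 : ∀ b : A, D1.D (D2.D (D1.D U) * b)
      = D1.D (D2.D (D1.D U)) * b + D2.D (D1.D U) * D1.D b :=
    fun b => D1.leibniz_even _ hw2 b
  have hLe3 : ∀ b : A, D1.D (D1.D (D1.D U) * b)
      = D1.D (D1.D (D1.D U)) * b + D1.D (D1.D U) * D1.D b :=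
    fun b => D1.leibniz_even _ hy1 b
  have hLe4 : ∀ b : A, D1.D (D2.D (D2.D U) * b)
      = D1.D (D2.D (D2.D U)) * b + D2.D (D2.D U) * D1.D b :=
    fun b => D1.leibniz_even _ hy2 b
  have hLe5 : ∀ b : A, D2.D (D1.D (D2.D U) * b)
      = D2.D (D1.D (D2.D U)) * b + D1.D (D2.D U) * D2.D b :=
    fun b => D2.leibniz_even _ hw1 b
  have hLe6 : ∀ b : A, D2.D (D2.D (D1.D U) * b)
      = D2.D (D2.D (D1.D U)) * b + D2.D (D1.D U) * D2.D b :=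
    fun b => D2.leibniz_even _ hw2 b
  have hLe7 : ∀ b : A, D2.D (D1.D (D1.D U) * b)
      = D2.D (D1.D (D1.D U)) * b + D1.D (D1.D U) * D2.D b :=
    fun b => D2.leibniz_even _ hy1 b
  have hLe8 : ∀ b : A, D2.D (D2.D (D2.D U) * b)
      = D2.D (D2.D (D2.D U)) * b + D2.D (D2.D U) * D2.D b :=
    fun b => D2.leibniz_even _ hy2 b
  have c1 : ∀ z : A, D1.D U * (D1.D U * z) = 0 := by
    intro z; rw [← mul_assoc, hsq0 _ hu1, zero_mul]
  have c2 : ∀ z : A, D2.D U * (D2.D U * z) = 0 := by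
    intro z; rw [← mul_assoc, hsq0 _ hu2, zero_mul]
  have c3 : ∀ z : A, D1.D U * (D2.D U * z) = -(D2.D U * (D1.D U * z)) := by
    intro z
    rw [← mul_assoc, S.odd_anticomm _ hu1 _ hu2, neg_mul, mul_assoc]
  have c4 : ∀ z : A, D1.D (D1.D U) * (D1.D U * z) = D1.D U * (D1.D (D1.D U) * z) :=
    fun z => ce _ hy1 _ z
  have c5 : ∀ z : A, D1.D (D1.D U) * (D2.D U * z) = D2.D U * (D1.D (D1.D U) * z) :=
    fun z => ce _ hy1 _ z
  have c6 : ∀ z : A, D2.D (D2.D U) * (D1.D U * z) = D1.D U * (D2.D (D2.D U) * z) :=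
    fun z => ce _ hy2 _ z
  have c7 : ∀ z : A, D2.D (D2.D U) * (D2.D U * z) = D2.D U * (D2.D (D2.D U) * z) :=
    fun z => ce _ hy2 _ z
  have c8 : ∀ z : A, D1.D (D2.D U) * (D1.D U * z) = D1.D U * (D1.D (D2.D U) * z) :=
    fun z => ce _ hw1 _ z
  have c9 : ∀ z : A, D1.D (D2.D U) * (D2.D U * z) = D2.D U * (D1.D (D2.D U) * z) :=
    fun z => ce _ hw1 _ z
  have c10 : ∀ z : A, D2.D (D1.D U) * (D1.D U * z) = D1.D U * (D2.D (D1.D U) * z) :=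
    fun z => ce _ hw2 _ z
  have c11 : ∀ z : A, D2.D (D1.D U) * (D2.D U * z) = D2.D U * (D2.D (D1.D U) * z) :=
    fun z => ce _ hw2 _ z
  intro a
  simp only [hQ, map_sub, map_add, map_smul, map_neg, h1, h2, hK1, hK2,
    hLo1, hLo2, hLo3, hLo4, hLe1, hLe2, hLe3, hLe4, hLe5, hLe6, hLe7, hLe8,
    hsq, hanti, mul_add, mul_sub, add_mul, sub_mul, mul_neg, neg_mul, neg_neg,
    smul_add, smul_sub, smul_neg, smul_smul, smul_mul_assoc, mul_smul_comm,
    mul_assoc, k1, k2, c1, c2, c3, c4, c5, c6, c7, c8, c9, c10, c11,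
    mul_zero, zero_mul, smul_zero, add_zero, zero_add, sub_zero, zero_sub]
  module
end
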